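/- arXiv:2404.02080 — 4 statements merged into one kernel-verified Lean document; each statement's English description precedes it below -/
import Mathlib

section
/- The map (x,p) ↦ u(x,p) from ℝⁿ × ℝⁿ to ℝᵐ, where u(x,p) is the unique minimizer over ω ∈ ℝᵐ of L(x,ω) + p·f(x,ω), is well defined and continuously differentiable on ℝⁿ × ℝⁿ. -/
/-!
For fixed `(x, p)`, the function `ω ↦ L x ω + ⟪p, f x ω⟫` differs from `L x` by an affine
function of `ω`, so its Hessian is bounded below by `δL`. Restricting to segments, it lies above
its tangent plane at any `u` by at least `δL / 2 * ‖ω - u‖ ^ 2`; hence it is coercive, so it has a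
minimizer, and its minimizers are exactly its critical points, of which there is only one. The
minimizer is thus the zero of the partial gradient in `ω`, whose `ω`-derivative (the Hessian) is
invertible, and the implicit function theorem makes it `C¹` in `(x, p)`.
-/

open scoped InnerProductSpace

noncomputable section

abbrev E (k : ℕ) : Type := EuclideanSpace ℝ (Fin k)

open Filter Topology Function

theorem add_deriv_add_half_le_of_deriv2_ge {φ φ' φ'' : ℝ → ℝ} {κ : ℝ}
    (hφ : ∀ t, HasDerivAt φ (φ' t) t) (hφ' : ∀ t, HasDerivAt φ' (φ'' t) t)
    (hκ : ∀ t, κ ≤ φ'' t) : φ 0 + φ' 0 + κ / 2 ≤ φ 1 := by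
  have hψ : ∀ t, HasDerivAt (fun s => φ s - κ / 2 * s ^ 2) (φ' t - κ * t) t := fun t =>
    ((hφ t).sub ((hasDerivAt_pow 2 t).const_mul (κ / 2))).congr_deriv (by norm_num; ring)
  have hψ' : ∀ t, HasDerivAt (fun s => φ' s - κ * s) (φ'' t - κ) t := fun t =>
    ((hφ' t).sub ((hasDerivAt_id t).const_mul κ)).congr_deriv (by rw [mul_one])
  have hconvex : ConvexOn ℝ Set.univ fun s => φ s - κ / 2 * s ^ 2 := by
    refine convexOn_of_hasDerivWithinAt2_nonneg convex_univ
      (continuous_iff_continuousAt.2 fun t => (hψ t).continuousAt).continuousOn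
      (fun t _ => (hψ t).hasDerivWithinAt) (fun t _ => (hψ' t).hasDerivWithinAt)
      fun t _ => sub_nonneg.2 (hκ t)
  have := hconvex.le_slope_of_hasDerivAt (Set.mem_univ 0) (Set.mem_univ 1) one_pos (hψ 0)
  simp only [slope_def_field] at this
  norm_num at this
  linarith

variable {X : Type*} [NormedAddCommGroup X] [NormedSpace ℝ X]

section StrongConvexity

variable {h : X → ℝ} {δ : ℝ} (hh : ContDiff ℝ 2 h)
  (hhess : ∀ x c, δ * ‖c‖ ^ 2 ≤ fderiv ℝ (fderiv ℝ h) x c c)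
include hh hhess

theorem add_fderiv_add_sq_le_of_fderiv2_ge (a b : X) :
    h a + fderiv ℝ h a (b - a) + δ / 2 * ‖b - a‖ ^ 2 ≤ h b := by
  set c := b - a
  have hline : ∀ t : ℝ, HasDerivAt (fun s : ℝ => a + s • c) c t := fun t => by
    simpa using ((hasDerivAt_id t).smul_const c).const_add a
  have hd1 : ∀ x, HasFDerivAt h (fderiv ℝ h x) x := fun x =>
    (hh.differentiable two_ne_zero x).hasFDerivAt
  have hd2 : ∀ x, HasFDerivAt (fderiv ℝ h) (fderiv ℝ (fderiv ℝ h) x) x := fun x =>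
    ((hh.fderiv_right one_add_one_eq_two.le).differentiable one_ne_zero x).hasFDerivAt
  have := add_deriv_add_half_le_of_deriv2_ge (φ := fun t => h (a + t • c))
    (φ' := fun t => fderiv ℝ h (a + t • c) c)
    (φ'' := fun t => fderiv ℝ (fderiv ℝ h) (a + t • c) c c)
    (fun t => (hd1 _).comp_hasDerivAt t (hline t))
    (fun t => ((ContinuousLinearMap.apply ℝ ℝ c).hasFDerivAt.comp _ (hd2 _)).comp_hasDerivAt t
      (hline t))
    (fun t => hhess _ c)
  simp only [zero_smul, add_zero, one_smul, c, add_sub_cancel] at this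
  linarith

theorem fderiv_eq_zero_iff_forall_le_of_fderiv2_ge (hδ : 0 ≤ δ) {u : X} :
    fderiv ℝ h u = 0 ↔ ∀ ω, h u ≤ h ω := by
  refine ⟨fun hu ω => ?_, fun hu => IsLocalMin.fderiv_eq_zero (Eventually.of_forall hu)⟩
  have := add_fderiv_add_sq_le_of_fderiv2_ge hh hhess u ω
  rw [hu, zero_apply, add_zero] at this
  nlinarith [sq_nonneg ‖ω - u‖]

theorem eq_of_fderiv_eq_zero_of_fderiv2_ge (hδ : 0 < δ) {u v : X} (hu : fderiv ℝ h u = 0)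
    (hv : fderiv ℝ h v = 0) : u = v := by
  have huv := add_fderiv_add_sq_le_of_fderiv2_ge hh hhess u v
  have hvu := add_fderiv_add_sq_le_of_fderiv2_ge hh hhess v u
  rw [hu, zero_apply, add_zero] at huv
  rw [hv, zero_apply, add_zero, norm_sub_rev] at hvu
  have : ‖v - u‖ ^ 2 = 0 := by nlinarith [sq_nonneg ‖v - u‖]
  exact (sub_eq_zero.1 (norm_eq_zero.1 (pow_eq_zero_iff two_ne_zero |>.1 this))).symm

theorem tendsto_cocompact_atTop_of_fderiv2_ge [ProperSpace X] (hδ : 0 < δ) :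
    Tendsto h (cocompact X) atTop := by
  set M := ‖fderiv ℝ h 0‖
  have hbound : ∀ ω, h 0 + ‖ω‖ * (δ / 2 * ‖ω‖ - M) ≤ h ω := fun ω => by
    have := add_fderiv_add_sq_le_of_fderiv2_ge hh hhess 0 ω
    have hM := (fderiv ℝ h 0).le_opNorm ω
    rw [sub_zero] at this
    nlinarith [neg_abs_le (fderiv ℝ h 0 ω), Real.norm_eq_abs (fderiv ℝ h 0 ω)]
  have hq : Tendsto (fun r : ℝ => h 0 + r * (δ / 2 * r - M)) atTop atTop :=
    tendsto_atTop_add_const_left _ _ <| tendsto_id.atTop_mul_atTop₀ <|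
      tendsto_atTop_add_const_right _ _ (tendsto_id.const_mul_atTop (half_pos hδ))
  exact tendsto_atTop_mono hbound (hq.comp tendsto_norm_cocompact_atTop)

theorem existsUnique_fderiv_eq_zero_of_fderiv2_ge [ProperSpace X] (hδ : 0 < δ) :
    ∃! u, fderiv ℝ h u = 0 := by
  obtain ⟨u, hu⟩ := hh.continuous.exists_forall_le
    (tendsto_cocompact_atTop_of_fderiv2_ge hh hhess hδ)
  exact ⟨u, (fderiv_eq_zero_iff_forall_le_of_fderiv2_ge hh hhess hδ.le).2 hu,
    fun v hv => eq_of_fderiv_eq_zero_of_fderiv2_ge hh hhess hδ hv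
      ((fderiv_eq_zero_iff_forall_le_of_fderiv2_ge hh hhess hδ.le).2 hu)⟩

end StrongConvexity

theorem ContinuousLinearMap.isInvertible_toStrongDual_of_injective
    {𝕜 : Type*} [NontriviallyNormedField 𝕜] [CompleteSpace 𝕜]
    {V : Type*} [NormedAddCommGroup V] [NormedSpace 𝕜 V] [FiniteDimensional 𝕜 V]
    {B : V →L[𝕜] StrongDual 𝕜 V} (hB : Injective B) : B.IsInvertible := by
  have hdim : Module.finrank 𝕜 V = Module.finrank 𝕜 (StrongDual 𝕜 V) := by
    rw [← LinearMap.toContinuousLinearMap.finrank_eq, Subspace.dual_finrank_eq]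
  exact ⟨(LinearMap.linearEquivOfInjective (B : V →ₗ[𝕜] StrongDual 𝕜 V) hB hdim)
    |>.toContinuousLinearEquiv, rfl⟩

theorem ContinuousLinearMap.injective_of_mul_norm_sq_le {B : X →L[ℝ] X →L[ℝ] ℝ} {δ : ℝ}
    (hδ : 0 < δ) (hB : ∀ c, δ * ‖c‖ ^ 2 ≤ B c c) : Injective B := by
  refine (injective_iff_map_eq_zero B).2 fun c hc => ?_
  have := hB c
  rw [hc, zero_apply] at this
  exact norm_eq_zero.1 (pow_eq_zero_iff two_ne_zero |>.1 (by nlinarith [sq_nonneg ‖c‖]))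

theorem contDiff_of_forall_fderiv_eq_zero_iff {Z : Type*} [NormedAddCommGroup Z]
    [NormedSpace ℝ Z] [CompleteSpace Z] [CompleteSpace X] {Φ : Z → X → ℝ} {k : WithTop ℕ∞}
    (hΦ : ContDiff ℝ (k + 1) (uncurry Φ)) (hk : k ≠ 0) {u : Z → X}
    (hcrit : ∀ z ω, fderiv ℝ (Φ z) ω = 0 ↔ ω = u z)
    (hnondeg : ∀ z, (fderiv ℝ (fderiv ℝ (Φ z)) (u z)).IsInvertible) : ContDiff ℝ k u := by
  set G : Z × X → StrongDual ℝ X := fun q => fderiv ℝ (Φ q.1) q.2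
  have hG : ContDiff ℝ k G :=
    ContDiff.fderiv (f := fun q : Z × X => Φ q.1)
      (hΦ.comp (contDiff_fst.fst.prodMk contDiff_snd)) contDiff_snd le_rfl
  have hpartial : ∀ z ω, fderiv ℝ G (z, ω) ∘L .inr ℝ Z X = fderiv ℝ (fderiv ℝ (Φ z)) ω :=
    fun z ω =>
      ((hG.differentiable hk _).hasFDerivAt.comp ω (hasFDerivAt_prodMk_right z ω)).fderiv.symm
  refine contDiff_iff_contDiffAt.2 fun z₀ => ?_
  have hG₀ : ContDiffAt ℝ k G (z₀, u z₀) := hG.contDiffAt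
  have hinv : (fderiv ℝ G (z₀, u z₀) ∘L .inr ℝ Z X).IsInvertible := by
    rw [hpartial]
    exact hnondeg z₀
  refine (hG₀.contDiffAt_implicitFunction hk hinv).congr_of_eventuallyEq ?_
  filter_upwards [hG₀.eventually_apply_implicitFunction hk hinv] with z hz
  exact ((hcrit z _).1 (hz.trans ((hcrit z₀ _).2 rfl))).symm

theorem fderiv_fderiv_add_const_add_clm {F : Type*} [NormedAddCommGroup F] [NormedSpace ℝ F]
    {h : X → F} (hh : Differentiable ℝ h) (c : F) (ℓ : X →L[ℝ] F) :
    fderiv ℝ (fderiv ℝ fun ω => h ω + (c + ℓ ω)) = fderiv ℝ (fderiv ℝ h) := by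
  have : fderiv ℝ (fun ω => h ω + (c + ℓ ω)) = fun ω => fderiv ℝ h ω + ℓ := funext fun ω =>
    ((hh ω).hasFDerivAt.add (ℓ.hasFDerivAt.const_add c)).fderiv
  rw [this]
  exact funext fun ω => fderiv_add_const ℓ

theorem minimizer_map_contDiff_general
    (n m : ℕ)
    (f0 : E n → E n) (fi : Fin m → E n → E n)
    (hf0 : ContDiff ℝ 2 f0) (hfi : ∀ i, ContDiff ℝ 2 (fi i))
    (f : E n → E m → E n)
    (hf : ∀ x u, f x u = f0 x + ∑ i, u i • fi i x)
    (L : E n → E m → ℝ)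
    (hL : ContDiff ℝ 2 (fun q : E n × E m => L q.1 q.2))
    (δL : ℝ) (hδL : 0 < δL)
    (hconv : ∀ x u, ∀ c : E m,
      δL * ‖c‖ ^ 2 ≤ iteratedFDeriv ℝ 2 (fun ω => L x ω) u ![c, c]) :
    ∃ ustar : E n × E n → E m,
      ContDiff ℝ 1 ustar ∧
      ∀ x p : E n,
        (∀ ω : E m, L x (ustar (x, p)) + ⟪p, f x (ustar (x, p))⟫_ℝ
            ≤ L x ω + ⟪p, f x ω⟫_ℝ) ∧
        (∀ ω₀ : E m,
          (∀ ω : E m, L x ω₀ + ⟪p, f x ω₀⟫_ℝ ≤ L x ω + ⟪p, f x ω⟫_ℝ) →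
            ω₀ = ustar (x, p)) := by
  set Φ : E n × E n → E m → ℝ := fun z ω => L z.1 ω + ⟪z.2, f z.1 ω⟫_ℝ
  have hΦ : ContDiff ℝ 2 (uncurry Φ) := by
    simp only [Φ, hf, uncurry_def]
    refine (hL.comp (contDiff_fst.fst.prodMk contDiff_snd)).add (contDiff_fst.snd.inner ℝ ?_)
    fun_prop
  have hhess : ∀ z ω c, δL * ‖c‖ ^ 2 ≤ fderiv ℝ (fderiv ℝ (Φ z)) ω c c := by
    rintro ⟨x, p⟩ ω c
    have haffine : Φ (x, p) = fun ω => L x ω + (⟪p, f0 x⟫_ℝ +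
        (innerSL ℝ p ∘L ∑ i, (EuclideanSpace.proj i).smulRight (fi i x)) ω) := by
      ext ω
      simp [Φ, hf, inner_add_right, inner_sum, real_inner_smul_right]
    rw [haffine, fderiv_fderiv_add_const_add_clm]
    · simpa [iteratedFDeriv_two_apply] using hconv x ω c
    · exact (hL.comp (contDiff_const.prodMk contDiff_id)).differentiable two_ne_zero
  have hΦz : ∀ z, ContDiff ℝ 2 (Φ z) := fun z => hΦ.comp (contDiff_const.prodMk contDiff_id)
  choose ustar hustar huniq using fun z =>
    existsUnique_fderiv_eq_zero_of_fderiv2_ge (hΦz z) (hhess z) hδL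
  have hcrit : ∀ z ω, fderiv ℝ (Φ z) ω = 0 ↔ ω = ustar z := fun z ω =>
    ⟨huniq z ω, by rintro rfl; exact hustar z⟩
  have hmin : ∀ z ω, fderiv ℝ (Φ z) ω = 0 ↔ ∀ ω', Φ z ω ≤ Φ z ω' := fun z _ =>
    fderiv_eq_zero_iff_forall_le_of_fderiv2_ge (hΦz z) (hhess z) hδL.le
  have hnondeg : ∀ z, (fderiv ℝ (fderiv ℝ (Φ z)) (ustar z)).IsInvertible := fun z =>
    ContinuousLinearMap.isInvertible_toStrongDual_of_injective
      (ContinuousLinearMap.injective_of_mul_norm_sq_le hδL (hhess z _))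
  refine ⟨ustar, contDiff_of_forall_fderiv_eq_zero_iff (k := 1) hΦ one_ne_zero hcrit hnondeg,
    fun x p => ⟨(hmin _ _).1 (hustar (x, p)), fun ω₀ hω₀ => (hcrit _ _).1 ((hmin _ _).2 hω₀)⟩⟩

/-- The map `(x, p) ↦ u(x, p)`, where `u(x, p)` is the unique minimizer over
`ω ∈ ℝᵐ` of `L x ω + ⟪p, f x ω⟫`, is well defined and continuously
differentiable on `ℝⁿ × ℝⁿ`. -/
theorem minimizer_map_contDiff
    (n m : ℕ) (hn : 1 ≤ n) (hm : 1 ≤ m)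
    (f0 : E n → E n) (fi : Fin m → E n → E n)
    (hf0 : ContDiff ℝ 2 f0) (hfi : ∀ i, ContDiff ℝ 2 (fi i))
    (f : E n → E m → E n)
    (hf : ∀ x u, f x u = f0 x + ∑ i, u i • fi i x)
    (L : E n → E m → ℝ)
    (hL : ContDiff ℝ 2 (fun q : E n × E m => L q.1 q.2))
    (δL : ℝ) (hδL : 0 < δL)
    (hconv : ∀ x u, ∀ c : E m,
      δL * ‖c‖ ^ 2 ≤ iteratedFDeriv ℝ 2 (fun ω => L x ω) u ![c, c]) :
    ∃ ustar : E n × E n → E m,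
      ContDiff ℝ 1 ustar ∧
      ∀ x p : E n,
        (∀ ω : E m, L x (ustar (x, p)) + ⟪p, f x (ustar (x, p))⟫_ℝ
            ≤ L x ω + ⟪p, f x ω⟫_ℝ) ∧
        (∀ ω₀ : E m,
          (∀ ω : E m, L x ω₀ + ⟪p, f x ω₀⟫_ℝ ≤ L x ω + ⟪p, f x ω⟫_ℝ) →
            ω₀ = ustar (x, p)) :=
  minimizer_map_contDiff_general n m f0 fi hf0 hfi f hf L hL δL hδL hconv
end
end

section
/- For every t ∈ [0,T], every z ∈ U and every v ∈ ℝⁿ, one has the identity d/dt [ p(t,z) · (x_z(t,z) v) ] = −( L_x(x(t,z),u(t,z)) · (x_z(t,z)v) + L_u(x(t,z),u(t,z)) · (u_z(t,z)v) ); in particular, if z ↦ L(x(t,z),u(t,z)) is differentiable with z-gradient Γ_z(t,z), then d/dt [ p(t,z) · x_z(t,z) v ] = −Γ_z(t,z)·v. -/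
/-!
By the product rule, `d/dt ⟪p, x_z v⟫ = ⟪ṗ, x_z v⟫ + ⟪p, f_x x_z v + f_u u_z v⟫`. The adjoint
equation turns the first term into `-⟪p, f_x x_z v⟫ - L_x x_z v`, cancelling the `f_x` part, and
stationarity replaces `⟪p, f_u u_z v⟫` by `-L_u u_z v`. What remains, `-(L_x x_z v + L_u u_z v)`,
is `-Γ_z v` by the chain rule through `w ↦ (x w, u w)`.
-/

open scoped InnerProductSpace

noncomputable section

section Pairing

variable {F : Type*} [NormedAddCommGroup F] [InnerProductSpace ℝ F] {G : Type*}

theorem inner_variation_add_inner_adjoint_eq {p p' : F} {A : F → F} {B : G → F} {a : F → ℝ}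
    {b : G → ℝ} (hadj : ∀ h, ⟪p', h⟫_ℝ = -⟪p, A h⟫_ℝ - a h) (hstat : ∀ ω, ⟪p, B ω⟫_ℝ + b ω = 0)
    (ξ : F) (η : G) :
    ⟪p, A ξ + B η⟫_ℝ + ⟪p', ξ⟫_ℝ = -(a ξ + b η) := by
  rw [inner_add_right, hadj ξ]
  linarith [hstat η]

end Pairing

section Partials

variable {F G H K : Type*} [NormedAddCommGroup F] [NormedSpace ℝ F] [NormedAddCommGroup G]
  [NormedSpace ℝ G] [NormedAddCommGroup H] [NormedSpace ℝ H] [NormedAddCommGroup K]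
  [NormedSpace ℝ K]

theorem HasFDerivAt.comp_prodMk_partialDerivs {L : G → H → K} {x : F → G} {u : F → H}
    {X : F →L[ℝ] G} {Y : F →L[ℝ] H} {z : F}
    (hL : DifferentiableAt ℝ (fun q : G × H => L q.1 q.2) (x z, u z))
    (hx : HasFDerivAt x X z) (hu : HasFDerivAt u Y z) :
    HasFDerivAt (fun w => L (x w) (u w))
      ((fderiv ℝ (fun y => L y (u z)) (x z)).comp X
        + (fderiv ℝ (fun ω => L (x z) ω) (u z)).comp Y) z := by
  have hD := hL.hasFDerivAt
  have hfst : fderiv ℝ (fun y => L y (u z)) (x z)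
      = (fderiv ℝ (fun q : G × H => L q.1 q.2) (x z, u z)).comp (.inl ℝ G H) :=
    (hD.comp (f := fun y => (y, u z)) (x z) (hasFDerivAt_prodMk_left (x z) (u z))).fderiv
  have hsnd : fderiv ℝ (fun ω => L (x z) ω) (u z)
      = (fderiv ℝ (fun q : G × H => L q.1 q.2) (x z, u z)).comp (.inr ℝ G H) :=
    (hD.comp (f := fun ω => (x z, ω)) (u z) (hasFDerivAt_prodMk_right (x z) (u z))).fderiv
  refine (hD.comp (f := fun w => (x w, u w)) z (hx.prodMk hu)).congr_fderiv ?_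
  ext v
  rw [hfst, hsnd]
  exact (fderiv ℝ (fun q : G × H => L q.1 q.2) (x z, u z)).comp_inl_add_comp_inr (X v, Y v) |>.symm

end Partials

theorem deriv_p_dot_xz_general
    (n m : ℕ) (T : ℝ)
    (f : E n → E m → E n)
    (L : E n → E m → ℝ)
    (hL : ContDiff ℝ 1 (fun q : E n × E m => L q.1 q.2))
    (U : Set (E n))
    (x p p' : ℝ → E n → E n) (u : ℝ → E n → E m)
    (xz : ℝ → E n → (E n →L[ℝ] E n)) (uz : ℝ → E n → (E n →L[ℝ] E m))
    -- `xz` and `uz` are the `z`-Jacobians of `x` and `u`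
    (hxz : ∀ t : ℝ, ∀ z ∈ U, HasFDerivAt (x t) (xz t z) z)
    (huz : ∀ t : ℝ, ∀ z ∈ U, HasFDerivAt (u t) (uz t z) z)
    -- (i) the adjoint equation `ṗ = −p·f_x − L_x`
    (hpode : ∀ z ∈ U, ∀ t ∈ Set.Icc (0 : ℝ) T, HasDerivAt (fun s => p s z) (p' t z) t)
    (hpeq : ∀ z ∈ U, ∀ t ∈ Set.Icc (0 : ℝ) T, ∀ h : E n,
        ⟪p' t z, h⟫_ℝ =
          -⟪p t z, fderiv ℝ (fun y => f y (u t z)) (x t z) h⟫_ℝ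
          - fderiv ℝ (fun y => L y (u t z)) (x t z) h)
    -- (ii) the variational equation `d/dt x_z = f_x x_z + f_u u_z`
    (hvar : ∀ z ∈ U, ∀ t ∈ Set.Icc (0 : ℝ) T,
        HasDerivAt (fun s => xz s z)
          ((fderiv ℝ (fun y => f y (u t z)) (x t z)).comp (xz t z)
            + (fderiv ℝ (fun ω => f (x t z) ω) (u t z)).comp (uz t z)) t)
    -- (iii) the stationarity condition `p·f_u + L_u = 0`
    (hstat : ∀ z ∈ U, ∀ t ∈ Set.Icc (0 : ℝ) T, ∀ ω : E m,
        ⟪p t z, fderiv ℝ (fun ω' => f (x t z) ω') (u t z) ω⟫_ℝ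
          + fderiv ℝ (fun ω' => L (x t z) ω') (u t z) ω = 0) :
    ∀ t ∈ Set.Icc (0 : ℝ) T, ∀ z ∈ U, ∀ v : E n,
      HasDerivAt (fun s => ⟪p s z, xz s z v⟫_ℝ)
        (-(fderiv ℝ (fun y => L y (u t z)) (x t z) (xz t z v)
            + fderiv ℝ (fun ω' => L (x t z) ω') (u t z) (uz t z v))) t
      ∧ ∀ Γz : E n →L[ℝ] ℝ,
          HasFDerivAt (fun w => L (x t w) (u t w)) Γz z →
          HasDerivAt (fun s => ⟪p s z, xz s z v⟫_ℝ) (-(Γz v)) t := by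
  intro t ht z hz v
  have hxzv : HasDerivAt (fun s => xz s z v)
      (fderiv ℝ (fun y => f y (u t z)) (x t z) (xz t z v)
        + fderiv ℝ (fun ω => f (x t z) ω) (u t z) (uz t z v)) t := by
    simpa using (hvar z hz t ht).clm_apply (hasDerivAt_const t v)
  have hpair := ((hpode z hz t ht).inner ℝ hxzv).congr_deriv
    (inner_variation_add_inner_adjoint_eq (hpeq z hz t ht) (hstat z hz t ht) _ _)
  refine ⟨hpair, fun Γz hΓ => ?_⟩
  have hΓz := hΓ.unique ((hxz t z hz).comp_prodMk_partialDerivs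
    (hL.differentiable one_ne_zero _) (huz t z hz))
  rw [hΓz]
  exact hpair

/-- Along solutions of the adjoint equation, with `xz(t,z)` solving the
variational equation and the stationarity condition in force, one has
`d/dt [ p(t,z) · (xz(t,z) v) ] = −( L_x · (xz v) + L_u · (uz v) )`;
in particular, if `z ↦ L(x(t,z), u(t,z))` has `z`-differential `Γz`, then this
derivative equals `−Γz v`. -/
theorem deriv_p_dot_xz
    (n m : ℕ) (hn : 1 ≤ n) (hm : 1 ≤ m) (T : ℝ) (hT : 0 < T)
    (f0 : E n → E n) (fi : Fin m → E n → E n)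
    (hf0 : ContDiff ℝ 1 f0) (hfi : ∀ i, ContDiff ℝ 1 (fi i))
    (f : E n → E m → E n)
    (hf : ∀ y ω, f y ω = f0 y + ∑ i, ω i • fi i y)
    (L : E n → E m → ℝ)
    (hL : ContDiff ℝ 1 (fun q : E n × E m => L q.1 q.2))
    (U : Set (E n)) (hU : IsOpen U)
    (x p p' : ℝ → E n → E n) (u : ℝ → E n → E m)
    (xz : ℝ → E n → (E n →L[ℝ] E n)) (uz : ℝ → E n → (E n →L[ℝ] E m))
    (hxcont : Continuous fun q : ℝ × E n => x q.1 q.2)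
    (hpcont : Continuous fun q : ℝ × E n => p q.1 q.2)
    (hucont : Continuous fun q : ℝ × E n => u q.1 q.2)
    -- `xz` and `uz` are the `z`-Jacobians of `x` and `u`
    (hxz : ∀ t : ℝ, ∀ z ∈ U, HasFDerivAt (x t) (xz t z) z)
    (huz : ∀ t : ℝ, ∀ z ∈ U, HasFDerivAt (u t) (uz t z) z)
    -- (i) the adjoint equation `ṗ = −p·f_x − L_x`
    (hpode : ∀ z ∈ U, ∀ t ∈ Set.Icc (0 : ℝ) T, HasDerivAt (fun s => p s z) (p' t z) t)
    (hpeq : ∀ z ∈ U, ∀ t ∈ Set.Icc (0 : ℝ) T, ∀ h : E n,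
        ⟪p' t z, h⟫_ℝ =
          -⟪p t z, fderiv ℝ (fun y => f y (u t z)) (x t z) h⟫_ℝ
          - fderiv ℝ (fun y => L y (u t z)) (x t z) h)
    -- (ii) the variational equation `d/dt x_z = f_x x_z + f_u u_z`
    (hvar : ∀ z ∈ U, ∀ t ∈ Set.Icc (0 : ℝ) T,
        HasDerivAt (fun s => xz s z)
          ((fderiv ℝ (fun y => f y (u t z)) (x t z)).comp (xz t z)
            + (fderiv ℝ (fun ω => f (x t z) ω) (u t z)).comp (uz t z)) t)
    -- (iii) the stationarity condition `p·f_u + L_u = 0`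
    (hstat : ∀ z ∈ U, ∀ t ∈ Set.Icc (0 : ℝ) T, ∀ ω : E m,
        ⟪p t z, fderiv ℝ (fun ω' => f (x t z) ω') (u t z) ω⟫_ℝ
          + fderiv ℝ (fun ω' => L (x t z) ω') (u t z) ω = 0) :
    ∀ t ∈ Set.Icc (0 : ℝ) T, ∀ z ∈ U, ∀ v : E n,
      HasDerivAt (fun s => ⟪p s z, xz s z v⟫_ℝ)
        (-(fderiv ℝ (fun y => L y (u t z)) (x t z) (xz t z v)
            + fderiv ℝ (fun ω' => L (x t z) ω') (u t z) (uz t z v))) t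
      ∧ ∀ Γz : E n →L[ℝ] ℝ,
          HasFDerivAt (fun w => L (x t w) (u t w)) Γz z →
          HasDerivAt (fun s => ⟪p s z, xz s z v⟫_ℝ) (-(Γz v)) t :=
  deriv_p_dot_xz_general n m T f L hL U x p p' u xz uz hxz huz hpode hpeq hvar hstat
end
end

section
/- Let v ∈ ℝⁿ with x_z(0,z̄)v = 0, set w⁰(t) := x_z(t,z̄)v and b⁰(t) := u_z(t,z̄)v, and let w : [0,T] → ℝⁿ be the solution of ẇ = f_x(x(t,z̄),u(t,z̄)) w, w(0) = −x_{zz}(0,z̄)(v,v). Assume the third-order z-derivatives x_{zzz}(t,z̄)(v,v,v) and x̃_{zzz}(t,z̄)(v,v,v) exist, are C¹ in t, and satisfy the thrice-differentiated variational equations (equations (2.21)–(2.22) of the paper, with the second-order relation x̃_{zz}(t,z̄)(v,v) = x_{zz}(t,z̄)(v,v) + w(t) in force). Then x̃_{zzz}(t,z̄)(v,v,v) = x_{zzz}(t,z̄)(v,v,v) + W(t) for all t ∈ [0,T], where W : [0,T] → ℝⁿ is the solution of the linear ODE Ẇ(t) = f_x(x(t,z̄),u(t,z̄)) W(t) + 3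 f_{xx}(x(t,z̄),u(t,z̄))(w⁰(t) ⊗ w(t)) + 3 f_{xu}(x(t,z̄),u(t,z̄))(w(t) ⊗ b⁰(t)) with initial condition W(0) = −x_{zzz}(0,z̄)(v,v,v). -/
/-!
The difference `D := x̃_{zzz}(v,v,v) - (x_{zzz}(v,v,v) + W)` vanishes at `t = 0`. Subtracting
(2.21) and the equation for `W` from (2.22), all terms not involving `D` cancel because `f_{xx}`
and `f_{xu}` are linear in the slot holding `w`, so `Ḋ = f_x(x,u) D`. The coefficient
`t ↦ f_x(x(t),u(t))` is continuous, hence bounded on `[0,T]`, and a solution of a linear ODE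
with bounded coefficient and zero initial value is zero (Grönwall).
-/

open scoped InnerProductSpace

noncomputable section

/-- `f_x(x,u)`. -/
def fxD {n m : ℕ} (f : E n → E m → E n) (x : E n) (u : E m) : E n →L[ℝ] E n :=
  fderiv ℝ (fun y => f y u) x

/-- `f_u(x,u)`. -/
def fuD {n m : ℕ} (f : E n → E m → E n) (x : E n) (u : E m) : E m →L[ℝ] E n :=
  fderiv ℝ (fun ω => f x ω) u

/-- `f_{xx}(x,u)(a ⊗ b)`. -/
def fxxD {n m : ℕ} (f : E n → E m → E n) (x : E n) (u : E m) (a b : E n) : E n :=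
  iteratedFDeriv ℝ 2 (fun y => f y u) x ![a, b]

/-- `f_{xu}(x,u)(a ⊗ c)`, with `a` an `x`-direction and `c` a `u`-direction. -/
def fxuD {n m : ℕ} (f : E n → E m → E n) (x : E n) (u : E m) (a : E n) (c : E m) : E n :=
  fderiv ℝ (fun y => fderiv ℝ (fun ω => f y ω) u c) x a

/-- `f_{uu}(x,u)(c ⊗ d)`. -/
def fuuD {n m : ℕ} (f : E n → E m → E n) (x : E n) (u : E m) (c d : E m) : E n :=
  iteratedFDeriv ℝ 2 (fun ω => f x ω) u ![c, d]

/-- `f_{xxx}(x,u)(a ⊗ b ⊗ c)`. -/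
def fxxxD {n m : ℕ} (f : E n → E m → E n) (x : E n) (u : E m) (a b c : E n) : E n :=
  iteratedFDeriv ℝ 3 (fun y => f y u) x ![a, b, c]

/-- `f_{xxu}(x,u)(a ⊗ b ⊗ c)`, with `a, b` `x`-directions and `c` a `u`-direction. -/
def fxxuD {n m : ℕ} (f : E n → E m → E n) (x : E n) (u : E m) (a b : E n) (c : E m) : E n :=
  iteratedFDeriv ℝ 2 (fun y => fderiv ℝ (fun ω => f y ω) u c) x ![a, b]

/-- `f_{xuu}(x,u)(a ⊗ c ⊗ d)`, with `a` an `x`-direction and `c, d` `u`-directions. -/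
def fxuuD {n m : ℕ} (f : E n → E m → E n) (x : E n) (u : E m) (a : E n) (c d : E m) : E n :=
  fderiv ℝ (fun y => iteratedFDeriv ℝ 2 (fun ω => f y ω) u ![c, d]) x a

/-- `f_{uuu}(x,u)(c ⊗ d ⊗ e)`. -/
def fuuuD {n m : ℕ} (f : E n → E m → E n) (x : E n) (u : E m) (c d e : E m) : E n :=
  iteratedFDeriv ℝ 3 (fun ω => f x ω) u ![c, d, e]

open Set

theorem eqOn_zero_of_linear_ODE {F : Type*} [NormedAddCommGroup F] [NormedSpace ℝ F]
    {A : ℝ → F →L[ℝ] F} {y : ℝ → F} {a b : ℝ} (hA : ContinuousOn A (Icc a b))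
    (hy : ∀ t ∈ Icc a b, HasDerivAt y (A t (y t)) t) (ha : y a = 0) :
    EqOn y 0 (Icc a b) := by
  obtain ⟨C, hC⟩ := isCompact_Icc.exists_bound_of_continuousOn hA
  have hlip : ∀ t ∈ Ico a b, LipschitzOnWith C.toNNReal (A t) univ := fun t ht => by
    refine ((A t).lipschitz.weaken ?_).lipschitzOnWith
    rw [← norm_toNNReal]
    exact Real.toNNReal_le_toNNReal (hC t (Ico_subset_Icc_self ht))
  refine ODE_solution_unique_of_mem_Icc_right hlip (s := fun _ => univ)
    (fun t ht => (hy t ht).continuousAt.continuousWithinAt)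
    (fun t ht => (hy t (Ico_subset_Icc_self ht)).hasDerivWithinAt) (fun _ _ => mem_univ _)
    continuousOn_const (fun t _ => ?_) (fun _ _ => mem_univ _) ha
  rw [Pi.zero_apply, map_zero]
  exact hasDerivWithinAt_const t (Ici t) 0

section ControlAffine

variable {n m : ℕ}

lemma fxxD_add_right (f : E n → E m → E n) (x : E n) (u : E m) (a b c : E n) :
    fxxD f x u a (b + c) = fxxD f x u a b + fxxD f x u a c := by
  simp only [fxxD, iteratedFDeriv_two_apply, Matrix.cons_val_zero, Matrix.cons_val_one, map_add]

lemma fxuD_add_left (f : E n → E m → E n) (x : E n) (u : E m) (a b : E n) (c : E m) :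
    fxuD f x u (a + b) c = fxuD f x u a c + fxuD f x u b c :=
  map_add _ a b

variable {f0 : E n → E n} {fi : Fin m → E n → E n} {f : E n → E m → E n}

lemma fxD_eq_of_controlAffine (hf0 : Differentiable ℝ f0) (hfi : ∀ i, Differentiable ℝ (fi i))
    (hf : ∀ y ω, f y ω = f0 y + ∑ i, ω i • fi i y) (y : E n) (ω : E m) :
    fxD f y ω = fderiv ℝ f0 y + ∑ i, ω i • fderiv ℝ (fi i) y := by
  rw [fxD, funext fun z => hf z ω]
  exact ((hf0 y).hasFDerivAt.add
    (HasFDerivAt.fun_sum fun i _ => ((hfi i y).hasFDerivAt.const_smul (ω i)))).fderiv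

lemma continuous_fxD_of_controlAffine (hf0 : ContDiff ℝ 1 f0) (hfi : ∀ i, ContDiff ℝ 1 (fi i))
    (hf : ∀ y ω, f y ω = f0 y + ∑ i, ω i • fi i y) {x : ℝ → E n} {u : ℝ → E m}
    (hx : Continuous x) (hu : Continuous u) :
    Continuous fun t => fxD f (x t) (u t) := by
  simp only [fxD_eq_of_controlAffine (hf0.differentiable one_ne_zero)
    (fun i => (hfi i).differentiable one_ne_zero) hf]
  refine ((hf0.continuous_fderiv one_ne_zero).comp hx).add
    (continuous_finsetSum _ fun i _ => .fun_smul ?_ ?_)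
  · exact ((continuous_apply i).comp (PiLp.continuous_ofLp 2 _)).comp hu
  · exact ((hfi i).continuous_fderiv one_ne_zero).comp hx

end ControlAffine

theorem tilde_xzzz_eq_xzzz_add_W_general
    (n m : ℕ) (T : ℝ)
    (f0 : E n → E n) (fi : Fin m → E n → E n)
    (hf0 : ContDiff ℝ 3 f0) (hfi : ∀ i, ContDiff ℝ 3 (fi i))
    (f : E n → E m → E n)
    (hf : ∀ y ω, f y ω = f0 y + ∑ i, ω i • fi i y)
    -- the reference trajectory `t ↦ (x(t,z̄), u(t,z̄))`
    (x : ℝ → E n) (u : ℝ → E m)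
    (hx : Continuous x) (hu : Continuous u)
    -- `w⁰(t) = x_z(t,z̄)v` and `b⁰(t) = u_z(t,z̄)v`
    (w0 : ℝ → E n) (b0 : ℝ → E m)
    -- `X2 t = x_{zz}(t,z̄)(v,v)`, `U2 t = u_{zz}(t,z̄)(v,v)`
    (X2 : ℝ → E n) (U2 : ℝ → E m)
    (w : ℝ → E n)
    -- `X3 t = x_{zzz}(t,z̄)(v,v,v)`, `Xt3 t = x̃_{zzz}(t,z̄)(v,v,v)`,
    -- `U3 t = u_{zzz}(t,z̄)(v,v,v)`
    (X3 Xt3 : ℝ → E n) (U3 : ℝ → E m)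
    -- equation (2.21), the thrice-differentiated variational equation for `x`
    (hX3 : ∀ t ∈ Set.Icc (0 : ℝ) T,
        HasDerivAt X3
          (fxxxD f (x t) (u t) (w0 t) (w0 t) (w0 t)
            + (3 : ℝ) • fxxuD f (x t) (u t) (w0 t) (w0 t) (b0 t)
            + (3 : ℝ) • fxuuD f (x t) (u t) (w0 t) (b0 t) (b0 t)
            + fuuuD f (x t) (u t) (b0 t) (b0 t) (b0 t)
            + (3 : ℝ) • fxxD f (x t) (u t) (w0 t) (X2 t)
            + (3 : ℝ) • fuuD f (x t) (u t) (U2 t) (b0 t)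
            + (3 : ℝ) • (fxuD f (x t) (u t) (X2 t) (b0 t)
                + fxuD f (x t) (u t) (w0 t) (U2 t))
            + fuD f (x t) (u t) (U3 t)
            + fxD f (x t) (u t) (X3 t)) t)
    -- equation (2.22) for `x̃`, with `x̃_{zz}(t,z̄)(v,v) = X2 t + w t` in force
    (hXt3 : ∀ t ∈ Set.Icc (0 : ℝ) T,
        HasDerivAt Xt3
          (fxxxD f (x t) (u t) (w0 t) (w0 t) (w0 t)
            + (3 : ℝ) • fxxuD f (x t) (u t) (w0 t) (w0 t) (b0 t)
            + (3 : ℝ) • fxuuD f (x t) (u t) (w0 t) (b0 t) (b0 t)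
            + fuuuD f (x t) (u t) (b0 t) (b0 t) (b0 t)
            + (3 : ℝ) • fxxD f (x t) (u t) (w0 t) (X2 t + w t)
            + (3 : ℝ) • fuuD f (x t) (u t) (U2 t) (b0 t)
            + (3 : ℝ) • (fxuD f (x t) (u t) (X2 t + w t) (b0 t)
                + fxuD f (x t) (u t) (w0 t) (U2 t))
            + fuD f (x t) (u t) (U3 t)
            + fxD f (x t) (u t) (Xt3 t)) t)
    -- `x̃_{zzz}(0,z̄) = 0`, since `x̃(0,·)` is constant
    (hXt30 : Xt3 0 = 0)
    -- `W` solves the linear ODE (2.24) with initial data (2.25)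
    (W : ℝ → E n)
    (hWinit : W 0 = -X3 0)
    (hWode : ∀ t ∈ Set.Icc (0 : ℝ) T,
        HasDerivAt W
          (fxD f (x t) (u t) (W t)
            + (3 : ℝ) • fxxD f (x t) (u t) (w0 t) (w t)
            + (3 : ℝ) • fxuD f (x t) (u t) (w t) (b0 t)) t) :
    ∀ t ∈ Set.Icc (0 : ℝ) T, Xt3 t = X3 t + W t := by
  have hD : ∀ t ∈ Icc (0 : ℝ) T, HasDerivAt (fun t => Xt3 t - (X3 t + W t))
      (fxD f (x t) (u t) (Xt3 t - (X3 t + W t))) t := fun t ht =>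
    ((hXt3 t ht).sub ((hX3 t ht).add (hWode t ht))).congr_deriv (by
      simp only [map_sub, map_add, fxxD_add_right, fxuD_add_left, smul_add]
      abel)
  have hA := continuous_fxD_of_controlAffine (hf0.of_le (by norm_num))
    (fun i => (hfi i).of_le (by norm_num)) hf hx hu
  have hzero := eqOn_zero_of_linear_ODE hA.continuousOn hD (by simp [hXt30, hWinit])
  exact fun t ht => sub_eq_zero.mp (hzero ht)

/-- If `x_{zzz}(·,z̄)(v,v,v)` and `x̃_{zzz}(·,z̄)(v,v,v)` satisfy the
thrice-differentiated variational equations (2.21)–(2.22), with the second-order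
relation `x̃_{zz} = x_{zz} + w` in force, then
`x̃_{zzz}(t,z̄)(v,v,v) = x_{zzz}(t,z̄)(v,v,v) + W(t)`, where `W` solves
`Ẇ = f_x W + 3 f_{xx}(w⁰ ⊗ w) + 3 f_{xu}(w ⊗ b⁰)`, `W(0) = −x_{zzz}(0,z̄)(v,v,v)`. -/
theorem tilde_xzzz_eq_xzzz_add_W
    (n m : ℕ) (hn : 1 ≤ n) (hm : 1 ≤ m) (T : ℝ) (hT : 0 < T)
    (f0 : E n → E n) (fi : Fin m → E n → E n)
    (hf0 : ContDiff ℝ 3 f0) (hfi : ∀ i, ContDiff ℝ 3 (fi i))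
    (f : E n → E m → E n)
    (hf : ∀ y ω, f y ω = f0 y + ∑ i, ω i • fi i y)
    -- the reference trajectory `t ↦ (x(t,z̄), u(t,z̄))`
    (x : ℝ → E n) (u : ℝ → E m)
    (hx : Continuous x) (hu : Continuous u)
    -- `w⁰(t) = x_z(t,z̄)v` and `b⁰(t) = u_z(t,z̄)v`
    (w0 : ℝ → E n) (b0 : ℝ → E m)
    (hw0 : Continuous w0) (hb0 : Continuous b0)
    -- `X2 t = x_{zz}(t,z̄)(v,v)`, `U2 t = u_{zz}(t,z̄)(v,v)`
    (X2 : ℝ → E n) (U2 : ℝ → E m)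
    -- `w` solves `ẇ = f_x w`, `w(0) = −x_{zz}(0,z̄)(v,v)`
    (w : ℝ → E n)
    (hwinit : w 0 = -X2 0)
    (hwode : ∀ t ∈ Set.Icc (0 : ℝ) T, HasDerivAt w (fxD f (x t) (u t) (w t)) t)
    -- `X3 t = x_{zzz}(t,z̄)(v,v,v)`, `Xt3 t = x̃_{zzz}(t,z̄)(v,v,v)`,
    -- `U3 t = u_{zzz}(t,z̄)(v,v,v)`
    (X3 Xt3 : ℝ → E n) (U3 : ℝ → E m)
    -- equation (2.21), the thrice-differentiated variational equation for `x`
    (hX3 : ∀ t ∈ Set.Icc (0 : ℝ) T,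
        HasDerivAt X3
          (fxxxD f (x t) (u t) (w0 t) (w0 t) (w0 t)
            + (3 : ℝ) • fxxuD f (x t) (u t) (w0 t) (w0 t) (b0 t)
            + (3 : ℝ) • fxuuD f (x t) (u t) (w0 t) (b0 t) (b0 t)
            + fuuuD f (x t) (u t) (b0 t) (b0 t) (b0 t)
            + (3 : ℝ) • fxxD f (x t) (u t) (w0 t) (X2 t)
            + (3 : ℝ) • fuuD f (x t) (u t) (U2 t) (b0 t)
            + (3 : ℝ) • (fxuD f (x t) (u t) (X2 t) (b0 t)
                + fxuD f (x t) (u t) (w0 t) (U2 t))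
            + fuD f (x t) (u t) (U3 t)
            + fxD f (x t) (u t) (X3 t)) t)
    -- equation (2.22) for `x̃`, with `x̃_{zz}(t,z̄)(v,v) = X2 t + w t` in force
    (hXt3 : ∀ t ∈ Set.Icc (0 : ℝ) T,
        HasDerivAt Xt3
          (fxxxD f (x t) (u t) (w0 t) (w0 t) (w0 t)
            + (3 : ℝ) • fxxuD f (x t) (u t) (w0 t) (w0 t) (b0 t)
            + (3 : ℝ) • fxuuD f (x t) (u t) (w0 t) (b0 t) (b0 t)
            + fuuuD f (x t) (u t) (b0 t) (b0 t) (b0 t)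
            + (3 : ℝ) • fxxD f (x t) (u t) (w0 t) (X2 t + w t)
            + (3 : ℝ) • fuuD f (x t) (u t) (U2 t) (b0 t)
            + (3 : ℝ) • (fxuD f (x t) (u t) (X2 t + w t) (b0 t)
                + fxuD f (x t) (u t) (w0 t) (U2 t))
            + fuD f (x t) (u t) (U3 t)
            + fxD f (x t) (u t) (Xt3 t)) t)
    -- `x̃_{zzz}(0,z̄) = 0`, since `x̃(0,·)` is constant
    (hXt30 : Xt3 0 = 0)
    -- `W` solves the linear ODE (2.24) with initial data (2.25)
    (W : ℝ → E n)
    (hWinit : W 0 = -X3 0)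
    (hWode : ∀ t ∈ Set.Icc (0 : ℝ) T,
        HasDerivAt W
          (fxD f (x t) (u t) (W t)
            + (3 : ℝ) • fxxD f (x t) (u t) (w0 t) (w t)
            + (3 : ℝ) • fxuD f (x t) (u t) (w t) (b0 t)) t) :
    ∀ t ∈ Set.Icc (0 : ℝ) T, Xt3 t = X3 t + W t :=
  tilde_xzzz_eq_xzzz_add_W_general n m T f0 fi hf0 hfi f hf x u hx hu w0 b0 X2 U2 w X3 Xt3 U3 hX3
    hXt3 hXt30 W hWinit hWode
end
end

section
/- Let n ≥ 1, T ≠ 0, let A be an invertible n×n real matrix, let v ∈ ℝⁿ with |v| = 1, and let b_1,…,b_n ∈ ℝⁿ be arbitrary. For i ∈ {1,…,n} let Λ_i = [[ −T·A·(v_i·I_n + e_i vᵀ) , b_i ], [ 0_{1×n} , −6T·v_i³ ]] be the (n+1)×(n+1) matrix in block form. Then there exists i ∈ {1,…,n} such that Λ_i is invertible. -/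
/-!
Choose `i` with `v i ≠ 0`. `Λ_i` is block upper triangular, so it is invertible as soon as both
diagonal blocks are; the corner is `-6 T v_i³ ≠ 0`, and by the matrix determinant lemma
`det (v_i I + e_i vᵀ) = v_i ^ n (1 + v_i⁻¹ ⟪v, e_i⟫) = 2 v_i ^ n ≠ 0`.
-/

open Matrix

namespace Matrix

variable {K ι : Type*} [Field K] [Fintype ι] [DecidableEq ι]

theorem det_smul_one_add_vecMulVec {a : K} (ha : a ≠ 0) (u v : ι → K) :
    (a • (1 : Matrix ι ι K) + vecMulVec u v).det =
      a ^ Fintype.card ι * (1 + a⁻¹ * (v ⬝ᵥ u)) := by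
  have hfactor : a • (1 : Matrix ι ι K) + vecMulVec u v = a • (1 + vecMulVec (a⁻¹ • u) v) := by
    rw [smul_add, ← smul_vecMulVec, smul_smul, mul_inv_cancel₀ ha, one_smul]
  rw [hfactor, det_smul, vecMulVec_eq (Fin 1), det_one_add_replicateCol_mul_replicateRow,
    dotProduct_smul, smul_eq_mul]

theorem det_smul_one_add_vecMulVec_single {v : ι → K} {i : ι} (hi : v i ≠ 0) :
    (v i • (1 : Matrix ι ι K) + vecMulVec (Pi.single i 1) v).det = 2 * v i ^ Fintype.card ι := by
  rw [det_smul_one_add_vecMulVec hi, dotProduct_single_one, inv_mul_cancel₀ hi]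
  ring

theorem isUnit_smul_one_add_vecMulVec_single {v : ι → K} {i : ι} (hi : v i ≠ 0)
    (h2 : (2 : K) ≠ 0) : IsUnit (v i • (1 : Matrix ι ι K) + vecMulVec (Pi.single i 1) v) := by
  rw [isUnit_iff_isUnit_det, det_smul_one_add_vecMulVec_single hi, isUnit_iff_ne_zero]
  exact mul_ne_zero h2 (pow_ne_zero _ hi)

end Matrix

theorem exists_invertible_Lambda_general (n : ℕ) (T : ℝ) (hT : T ≠ 0)
    (A : Matrix (Fin n) (Fin n) ℝ) (hA : IsUnit A.det)
    (v : EuclideanSpace ℝ (Fin n)) (hv : ‖v‖ = 1)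
    (b : Fin n → Fin n → ℝ) :
    ∃ i : Fin n, IsUnit (Matrix.fromBlocks
        (-(T • (A * (v i • (1 : Matrix (Fin n) (Fin n) ℝ)
            + Matrix.vecMulVec (Pi.single i 1) (fun j => v j)))))
        (Matrix.of fun j (_ : Fin 1) => b i j)
        (0 : Matrix (Fin 1) (Fin n) ℝ)
        (Matrix.of fun (_ : Fin 1) (_ : Fin 1) => -6 * T * v i ^ 3)) := by
  obtain ⟨i, hi⟩ : ∃ i, v i ≠ 0 := by
    by_contra! hzero
    have : v = 0 := by ext j; exact hzero j
    simp [this] at hv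
  refine ⟨i, isUnit_fromBlocks_zero₂₁.mpr ⟨?_, ?_⟩⟩
  · have hM := isUnit_smul_one_add_vecMulVec_single (v := fun j => v j) hi two_ne_zero
    exact ((A.isUnit_iff_isUnit_det.mpr hA).mul hM |>.smul hT.isUnit.unit).neg
  · rw [isUnit_iff_isUnit_det, det_unique, of_apply, isUnit_iff_ne_zero]
    exact mul_ne_zero (mul_ne_zero (by norm_num) hT) (pow_ne_zero 3 hi)

/-- If `T ≠ 0`, `A` is invertible and `|v| = 1`, then for some index `i`
the block matrix `Λ_i = [[ −T·A·(v_i·I_n + e_i vᵀ) , b_i ], [ 0 , −6T·v_i³ ]]`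
is invertible. -/
theorem exists_invertible_Lambda (n : ℕ) (hn : 1 ≤ n) (T : ℝ) (hT : T ≠ 0)
    (A : Matrix (Fin n) (Fin n) ℝ) (hA : IsUnit A.det)
    (v : EuclideanSpace ℝ (Fin n)) (hv : ‖v‖ = 1)
    (b : Fin n → Fin n → ℝ) :
    ∃ i : Fin n, IsUnit (Matrix.fromBlocks
        (-(T • (A * (v i • (1 : Matrix (Fin n) (Fin n) ℝ)
            + Matrix.vecMulVec (Pi.single i 1) (fun j => v j)))))
        (Matrix.of fun j (_ : Fin 1) => b i j)
        (0 : Matrix (Fin 1) (Fin n) ℝ)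
        (Matrix.of fun (_ : Fin 1) (_ : Fin 1) => -6 * T * v i ^ 3)) :=
  exists_invertible_Lambda_general n T hT A hA v hv b
end
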